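/- Let n > 2 be a natural number. If (K, σ) is a σ-field that is n-algebraically closed but not (n+1)-algebraically closed, then the characteristic p of K is nonzero, and n = (p^{mk} − 1)/(p^k − 1) for some natural numbers m, k with m > 1. -/

import Mathlib

/-!
Call `b` σ-conjugate to `a` if `σ(t) a = t b` for some `t ≠ 0`. For `t ≠ 0`, the quantity
`t · P(σ(t) t⁻¹ a)` is additive in `t` and linear over the fixed field `F` of `σ`. Hence if `a`
and a conjugate `b = σ(z) z⁻¹ a ≠ a` are roots of `P`, so are the `|F| + 1` distinct points `a`,
`σ(μ + z)(μ + z)⁻¹ a` (`μ ∈ F`) of a projective line over `F`; a quadratic `σ(x) x + e x + f`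
has no other roots.

Let `P` have exactly `n` roots and pass a quadratic through two of them. It has at least
`n ≥ 3` roots, three roots of a quadratic contain a conjugate pair, so all its roots are
conjugate, in particular the two roots of `P`. Comparing `P` with the quadratic gives
`n = |F| + 1`, so `F` is finite of order `p^k` and `n = p^k + 1 = (p^{2k} - 1)/(p^k - 1)`.
-/

open Polynomial

variable {K : Type*} [Field K]

/-- `skewN σ i a = σ^{i-1}(a)⋯σ(a)·a`, with `skewN σ 0 a = 1`. -/
def skewN (σ : K →+* K) : ℕ → K → K
  | 0, _ => 1
  | i + 1, a => σ (skewN σ i a) * a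

/-- Right evaluation of a skew polynomial `P = Σ aᵢ Tⁱ` at `a`: `P(a) = Σ aᵢ Nᵢ(a)`. -/
noncomputable def skewEval (σ : K →+* K) (P : Polynomial K) (a : K) : K :=
  ∑ i ∈ P.support, P.coeff i * skewN σ i a

/-- Multiplication in the skew polynomial ring `K[T;σ]` (with `T·a = σ(a)·T`),
using `Polynomial K` as the carrier of coefficient sequences. -/
noncomputable def skewMul (σ : K →+* K) (P Q : Polynomial K) : Polynomial K :=
  ∑ i ∈ P.support, ∑ j ∈ Q.support,
    Polynomial.C (P.coeff i * (⇑σ)^[i] (Q.coeff j)) * Polynomial.X ^ (i + j)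

universe u

/-- `(K, σ)` is `c`-algebraically closed: every skew polynomial of degree `> 1` with nonzero
constant term has at least `c` distinct right roots. -/
def CAlgClosed {K : Type u} [Field K] (σ : K →+* K) (c : Cardinal.{u}) : Prop :=
  ∀ P : Polynomial K, 1 < P.natDegree → P.coeff 0 ≠ 0 →
    c ≤ Cardinal.mk {x : K // skewEval σ P x = 0}

section

variable (σ : K →+* K)

theorem skewN_conj {t : K} (ht : t ≠ 0) (i : ℕ) (a : K) :
    skewN σ i (σ t * t⁻¹ * a) = (⇑σ)^[i] t * t⁻¹ * skewN σ i a := by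
  induction i with
  | zero => simp [skewN, ht]
  | succ i ih =>
    have hσt : σ t ≠ 0 := (map_ne_zero σ).2 ht
    rw [skewN, skewN, ih, Function.iterate_succ_apply']
    simp only [map_mul, map_inv₀]
    field_simp

theorem skewEval_eq_sum_range (P : K[X]) (x : K) :
    skewEval σ P x = ∑ i ∈ Finset.range (P.natDegree + 1), P.coeff i * skewN σ i x :=
  Finset.sum_subset P.supp_subset_range_natDegree_succ fun i _ hi => by
    rw [notMem_support_iff.1 hi, zero_mul]

theorem skewEval_zero (P : K[X]) : skewEval σ P 0 = P.coeff 0 := by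
  rw [skewEval_eq_sum_range, Finset.sum_range_succ', Finset.sum_eq_zero] <;> simp [skewN]

theorem ne_zero_of_skewEval_eq_zero {P : K[X]} (hP : P.coeff 0 ≠ 0) {x : K}
    (hx : skewEval σ P x = 0) : x ≠ 0 := by
  rintro rfl
  exact hP (by rwa [skewEval_zero] at hx)

theorem natDegree_X_sq_add_C_mul_X_add_C (e f : K) :
    (X ^ 2 + C e * X + C f : K[X]).natDegree = 2 := by
  simpa using natDegree_quadratic (R := K) (b := e) (c := f) one_ne_zero

theorem skewEval_X_sq_add_C_mul_X_add_C (e f x : K) :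
    skewEval σ (X ^ 2 + C e * X + C f) x = σ x * x + e * x + f := by
  rw [skewEval_eq_sum_range, natDegree_X_sq_add_C_mul_X_add_C]
  simp [Finset.sum_range_succ, skewN, coeff_X, coeff_C]
  ring

noncomputable def skewTwist (P : K[X]) (a t : K) : K :=
  ∑ i ∈ P.support, P.coeff i * ((⇑σ)^[i] t * skewN σ i a)

theorem skewTwist_add (P : K[X]) (a s t : K) :
    skewTwist σ P a (s + t) = skewTwist σ P a s + skewTwist σ P a t := by
  simp only [skewTwist, iterate_map_add, ← Finset.sum_add_distrib]
  exact Finset.sum_congr rfl fun i _ => by ring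

theorem skewTwist_of_fixed (P : K[X]) (a : K) {μ : K} (hμ : σ μ = μ) :
    skewTwist σ P a μ = μ * skewEval σ P a := by
  simp only [skewTwist, skewEval, Function.iterate_fixed hμ, Finset.mul_sum]
  exact Finset.sum_congr rfl fun i _ => by ring

theorem skewTwist_eq_mul_skewEval (P : K[X]) (a : K) {t : K} (ht : t ≠ 0) :
    skewTwist σ P a t = t * skewEval σ P (σ t * t⁻¹ * a) := by
  simp only [skewTwist, skewEval, skewN_conj σ ht, Finset.mul_sum]
  exact Finset.sum_congr rfl fun i _ => by field_simp

theorem skewEval_add_fixed_eq_zero {P : K[X]} {a b z μ : K} (ha : skewEval σ P a = 0)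
    (hb : skewEval σ P b = 0) (hz : z ≠ 0) (hab : σ z * a = z * b) (hμ : σ μ = μ)
    (hμz : μ + z ≠ 0) : skewEval σ P (σ (μ + z) * (μ + z)⁻¹ * a) = 0 := by
  have hb' : σ z * z⁻¹ * a = b := by field_simp; exact hab
  have h := skewTwist_add σ P a μ z
  rw [skewTwist_eq_mul_skewEval σ P a hμz, skewTwist_of_fixed σ P a hμ,
    skewTwist_eq_mul_skewEval σ P a hz, hb', ha, hb] at h
  simpa [hμz] using h

def SkewConj (a b : K) : Prop := ∃ t : K, t ≠ 0 ∧ σ t * a = t * b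

theorem SkewConj.symm {σ : K →+* K} {a b : K} (h : SkewConj σ a b) : SkewConj σ b a := by
  obtain ⟨t, ht, hab⟩ := h
  refine ⟨t⁻¹, inv_ne_zero ht, ?_⟩
  have := (map_ne_zero σ).2 ht
  rw [map_inv₀]
  field_simp
  linear_combination -hab

theorem SkewConj.trans {σ : K →+* K} {a b c : K} (h₁ : SkewConj σ a b) (h₂ : SkewConj σ b c) :
    SkewConj σ a c := by
  obtain ⟨s, hs, hab⟩ := h₁
  obtain ⟨t, ht, hbc⟩ := h₂
  refine ⟨t * s, mul_ne_zero ht hs, ?_⟩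
  rw [map_mul]
  linear_combination σ t * hab + s * hbc

abbrev fixedField : Subfield K := σ.eqLocusField (RingHom.id K)

theorem apply_coe_fixedField (μ : fixedField σ) : σ μ = μ := μ.2

theorem add_ne_zero_of_fixed {z μ : K} (hz : σ z ≠ z) (hμ : σ μ = μ) : μ + z ≠ 0 := by
  intro h
  rw [eq_neg_of_add_eq_zero_right h, map_neg, hμ] at hz
  exact hz rfl

-- `Option (fixedField σ)` is the projective line over the fixed field, `none` being `∞`.
noncomputable def conjPoint (z a : K) : Option (fixedField σ) → K
  | none => a
  | some μ => σ (μ + z) * (μ + z)⁻¹ * a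

theorem conjPoint_injective {z a : K} (hz : σ z ≠ z) (ha : a ≠ 0) :
    Function.Injective (conjPoint σ z a) := by
  have key : ∀ μ ν : fixedField σ, σ (μ + z) * (μ + z)⁻¹ * a = σ (ν + z) * (ν + z)⁻¹ * a →
      (μ : K) = ν := by
    intro μ ν h
    have hμ := add_ne_zero_of_fixed σ hz (apply_coe_fixedField σ μ)
    have hν := add_ne_zero_of_fixed σ hz (apply_coe_fixedField σ ν)
    rw [map_add, map_add, apply_coe_fixedField, apply_coe_fixedField] at h
    field_simp at h
    have : (μ - ν : K) * (z - σ z) = 0 := by linear_combination h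
    simpa [sub_eq_zero, hz.symm, ha] using this
  have hne : ∀ μ : fixedField σ, σ (μ + z) * (μ + z)⁻¹ * a ≠ a := by
    intro μ h
    have hμ := add_ne_zero_of_fixed σ hz (apply_coe_fixedField σ μ)
    rw [map_add, apply_coe_fixedField] at h
    field_simp at h
    exact hz (by linear_combination h)
  rintro (_ | μ) (_ | ν) h
  · rfl
  · exact absurd h.symm (hne ν)
  · exact absurd h (hne μ)
  · exact congrArg some (Subtype.ext (key μ ν h))

theorem skewEval_conjPoint_eq_zero {P : K[X]} {a b z : K} (ha : skewEval σ P a = 0)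
    (hb : skewEval σ P b = 0) (hz : σ z ≠ z) (hab : σ z * a = z * b) :
    ∀ o, skewEval σ P (conjPoint σ z a o) = 0
  | none => ha
  | some μ => skewEval_add_fixed_eq_zero σ ha hb (by rintro rfl; simp at hz) hab
      (apply_coe_fixedField σ μ) (add_ne_zero_of_fixed σ hz (apply_coe_fixedField σ μ))

theorem skewConj_conjPoint {z : K} (hz : σ z ≠ z) (a : K) :
    ∀ o, SkewConj σ a (conjPoint σ z a o)
  | none => ⟨1, one_ne_zero, by simp [conjPoint]⟩
  | some μ => by
    have hμz := add_ne_zero_of_fixed σ hz (apply_coe_fixedField σ μ)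
    exact ⟨μ + z, hμz, by simp only [conjPoint]; field_simp⟩

theorem skewConj_of_three_roots {e f r₁ r₂ r₃ : K} (h₁₂ : r₁ ≠ r₂) (h₁₃ : r₁ ≠ r₃)
    (h₁ : σ r₁ * r₁ + e * r₁ + f = 0) (h₂ : σ r₂ * r₂ + e * r₂ + f = 0)
    (h₃ : σ r₃ * r₃ + e * r₃ + f = 0) : SkewConj σ r₂ r₃ := by
  have h₃₁ : r₃ - r₁ ≠ 0 := sub_ne_zero.2 h₁₃.symm
  have h₂₁ : r₂ - r₁ ≠ 0 := sub_ne_zero.2 h₁₂.symm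
  have hσ₃₁ : σ r₃ - σ r₁ ≠ 0 := by rw [← map_sub]; exact (map_ne_zero σ).2 h₃₁
  refine ⟨(r₂ - r₁) / (r₃ - r₁), div_ne_zero h₂₁ h₃₁, ?_⟩
  rw [map_div₀, map_sub, map_sub]
  field_simp
  linear_combination (r₂ - r₃) * h₁ + (r₃ - r₁) * h₂ + (r₁ - r₂) * h₃

theorem mem_range_conjPoint_of_quadratic {e f a b z x : K} (ha0 : a ≠ 0) (hz : σ z ≠ z)
    (hab : σ z * a = z * b) (ha : σ a * a + e * a + f = 0) (hb : σ b * b + e * b + f = 0)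
    (hx : σ x * x + e * x + f = 0) : x ∈ Set.range (conjPoint σ z a) := by
  by_cases hxa : x = a
  · exact ⟨none, hxa.symm⟩
  have hax : a - x ≠ 0 := sub_ne_zero.2 (Ne.symm hxa)
  have hσax : σ a - σ x ≠ 0 := by rw [← map_sub]; exact (map_ne_zero σ).2 hax
  -- the only `μ` with `σ(μ + z) a = (μ + z) x` if `μ` is fixed; the quadratic makes it fixed
  set μ := z * (x - b) / (a - x) with hμ_def
  have hμ : σ μ = μ := by
    rw [hμ_def, map_div₀, map_mul, map_sub, map_sub, div_eq_div_iff hσax hax]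
    refine mul_right_cancel₀ ha0 ?_
    linear_combination (-(z * (a - x))) * hb + (z * (b - x)) * ha + (z * (a - b)) * hx
      + ((σ x - σ b) * (a - x)) * hab
  have hμx : μ * (a - x) = z * (x - b) := by rw [hμ_def]; field_simp
  have hμz := add_ne_zero_of_fixed σ hz hμ
  refine ⟨some ⟨μ, hμ⟩, ?_⟩
  simp only [conjPoint]
  rw [map_add, hμ]
  field_simp
  linear_combination hμx + hab

theorem exists_quadratic_skewEval_eq_zero {a b : K} (hab : a ≠ b) (ha : a ≠ 0) (hb : b ≠ 0) :
    ∃ e f : K, f ≠ 0 ∧ skewEval σ (X ^ 2 + C e * X + C f) a = 0 ∧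
      skewEval σ (X ^ 2 + C e * X + C f) b = 0 := by
  have hba : b - a ≠ 0 := sub_ne_zero.2 hab.symm
  have hσba : σ (b - a) ≠ 0 := (map_ne_zero σ).2 hba
  set v := σ (b - a) / (b - a) * b with hv_def
  have hv : v * (b - a) = (σ b - σ a) * b := by rw [hv_def, map_sub]; field_simp
  refine ⟨-(v + σ a), v * a, mul_ne_zero (by positivity) ha, ?_, ?_⟩ <;>
    rw [skewEval_X_sq_add_C_mul_X_add_C]
  · ring
  · linear_combination -hv

theorem apply_ne_self_of_mul_eq_mul {a b z : K} (hz : z ≠ 0) (hab : a ≠ b)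
    (h : σ z * a = z * b) : σ z ≠ z :=
  fun h' => hab (mul_left_cancel₀ hz (by rwa [h'] at h))

open Cardinal in
theorem skewConj_of_three_le_card_roots {e f : K} (hf : f ≠ 0)
    (h3 : 3 ≤ #{x // skewEval σ (X ^ 2 + C e * X + C f) x = 0}) {x y : K}
    (hx : skewEval σ (X ^ 2 + C e * X + C f) x = 0)
    (hy : skewEval σ (X ^ 2 + C e * X + C f) y = 0) : SkewConj σ x y := by
  simp only [skewEval_X_sq_add_C_mul_X_add_C] at h3 hx hy
  obtain ⟨r₁, r₂, h₁₂⟩ := two_le_iff.1 (le_trans (by norm_num) h3)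
  obtain ⟨r₃, h₃₁, h₃₂⟩ := exists_ne_ne_of_three_le h3 r₁ r₂
  obtain ⟨z, hz0, hz⟩ := skewConj_of_three_roots σ (Subtype.coe_injective.ne h₁₂)
    (Subtype.coe_injective.ne h₃₁.symm) r₁.2 r₂.2 r₃.2
  have hσz := apply_ne_self_of_mul_eq_mul σ hz0 (Subtype.coe_injective.ne h₃₂.symm) hz
  have hr₂ : (r₂ : K) ≠ 0 := by
    rintro h
    have := r₂.2
    simp [h, hf] at this
  have hconj : ∀ u : K, σ u * u + e * u + f = 0 → SkewConj σ r₂ u := fun u hu => by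
    obtain ⟨o, rfl⟩ := mem_range_conjPoint_of_quadratic σ hr₂ hσz hz r₂.2 r₃.2 hu
    exact skewConj_conjPoint σ hσz _ o
  exact (hconj x hx).symm.trans (hconj y hy)

open Cardinal in
theorem card_option_fixedField_le_card_roots {P : K[X]} {a b z : K} (ha0 : a ≠ 0)
    (hz : σ z ≠ z) (hab : σ z * a = z * b) (ha : skewEval σ P a = 0)
    (hb : skewEval σ P b = 0) : #(Option (fixedField σ)) ≤ #{x // skewEval σ P x = 0} :=
  mk_le_of_injective
    (f := fun o => ⟨conjPoint σ z a o, skewEval_conjPoint_eq_zero σ ha hb hz hab o⟩)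
    fun _ _ h => conjPoint_injective σ hz ha0 (congrArg Subtype.val h)

open Cardinal in
theorem card_roots_quadratic_le_card_option_fixedField {e f a b z : K} (ha0 : a ≠ 0)
    (hz : σ z ≠ z) (hab : σ z * a = z * b) (ha : skewEval σ (X ^ 2 + C e * X + C f) a = 0)
    (hb : skewEval σ (X ^ 2 + C e * X + C f) b = 0) :
    #{x // skewEval σ (X ^ 2 + C e * X + C f) x = 0} ≤ #(Option (fixedField σ)) := by
  refine mk_le_of_surjective
    (f := fun o => ⟨conjPoint σ z a o, skewEval_conjPoint_eq_zero σ ha hb hz hab o⟩) ?_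
  rintro ⟨x, hx⟩
  simp only [skewEval_X_sq_add_C_mul_X_add_C] at ha hb hx
  obtain ⟨o, ho⟩ := mem_range_conjPoint_of_quadratic σ ha0 hz hab ha hb hx
  exact ⟨o, Subtype.ext ho⟩

end

theorem ringChar_ne_zero_and_eq_geom_of_card_option (F : Subfield K)
    {n : ℕ} (hF : Cardinal.mk (Option F) = n) : ringChar K ≠ 0 ∧ ∃ k : ℕ, 1 ≤ k ∧
      n = (ringChar K ^ (2 * k) - 1) / (ringChar K ^ k - 1) := by
  have : Finite (Option F) := Cardinal.lt_aleph0_iff_finite.1 (hF ▸ Cardinal.natCast_lt_aleph0)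
  have : Finite F := Finite.of_injective some (Option.some_injective _)
  have : Fintype F := Fintype.ofFinite F
  have hn : Nat.card F + 1 = n := by
    rw [← Finite.card_option, Nat.card, hF, Cardinal.toNat_natCast]
  obtain ⟨k, hp, hcard⟩ := FiniteField.card F (ringChar K)
  have hq : 2 ≤ ringChar K ^ (k : ℕ) := Nat.one_lt_pow k.ne_zero hp.one_lt
  refine ⟨hp.ne_zero, k, k.pos, ?_⟩
  rw [pow_mul', ← Nat.geomSum_eq hq, ← hn, Nat.card_eq_fintype_card, hcard]
  simp [Finset.sum_range_succ, add_comm]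

/-- If `n > 2` and `(K, σ)` is `n`-algebraically closed but not `(n+1)`-algebraically closed,
then `K` has characteristic `p ≠ 0` and `n = (p^{mk} − 1)/(p^k − 1)` for some naturals
`m, k` with `m > 1` (and `k ≥ 1`). -/
theorem stmt_18 {K : Type u} [Field K] (σ : K →+* K) (n : ℕ) (hn : 2 < n)
    (h1 : CAlgClosed σ (n : Cardinal.{u}))
    (h2 : ¬ CAlgClosed σ ((n : Cardinal.{u}) + 1)) :
    ringChar K ≠ 0 ∧ ∃ m k : ℕ, 1 < m ∧ 1 ≤ k ∧
      n = (ringChar K ^ (m * k) - 1) / (ringChar K ^ k - 1) := by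
  obtain ⟨P, hPdeg, hP0, hPlt⟩ : ∃ P : K[X], 1 < P.natDegree ∧ P.coeff 0 ≠ 0 ∧
      Cardinal.mk {x // skewEval σ P x = 0} < n + 1 := by
    simpa [CAlgClosed] using h2
  have hPcard : Cardinal.mk {x // skewEval σ P x = 0} = n :=
    le_antisymm (le_of_not_gt fun h => (Cardinal.natCast_add_one_le_iff.2 h).not_gt hPlt)
      (h1 P hPdeg hP0)
  obtain ⟨⟨a, ha⟩, ⟨b, hb⟩, hne⟩ := Cardinal.two_le_iff.1
    (hPcard ▸ (by exact_mod_cast hn.le : (2 : Cardinal) ≤ n))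
  have ha0 := ne_zero_of_skewEval_eq_zero σ hP0 ha
  have hab : a ≠ b := fun h => hne (Subtype.ext h)
  obtain ⟨e, f, hf, hQa, hQb⟩ :=
    exists_quadratic_skewEval_eq_zero σ hab ha0 (ne_zero_of_skewEval_eq_zero σ hP0 hb)
  have hQ := h1 (X ^ 2 + C e * X + C f) (by rw [natDegree_X_sq_add_C_mul_X_add_C]; norm_num)
    (by simpa using hf)
  obtain ⟨z, hz0, hz⟩ := skewConj_of_three_le_card_roots σ hf
    (le_trans (by exact_mod_cast hn) hQ) hQa hQb
  have hσz := apply_ne_self_of_mul_eq_mul σ hz0 hab hz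
  have hF : Cardinal.mk (Option (fixedField σ)) = n :=
    le_antisymm (hPcard ▸ card_option_fixedField_le_card_roots σ ha0 hσz hz ha hb)
      (hQ.trans (card_roots_quadratic_le_card_option_fixedField σ ha0 hσz hz hQa hQb))
  obtain ⟨hp, k, hk, hnk⟩ := ringChar_ne_zero_and_eq_geom_of_card_option _ hF
  exact ⟨hp, 2, k, one_lt_two, hk, hnk⟩
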